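/- arXiv:1712.04630 — 5 statements merged into one kernel-verified Lean document; each statement's English description precedes it below -/
import Mathlib

section
/- Generalized Taylor expansion of the generalized Mittag-Leffler function (Section 4, Example 2): Let λ > 0, μ > 0, ν > 0, β > 0, m ∈ ℕ and z > 0. Then there exists ξ ∈ (0,z) such that E^{ν}_{λ,μ}(z^β) = Σ_{j=0}^{m} ((ν)_j / (Γ(λj+μ) · j!)) · z^{βj} + ((ν)_{m+1}/(m+1)!) · z^{β(m+1)} · E^{ν+m+1}_{λ, λ(m+1)+μ}(ξ^β). -/
/-!
With `x = z ^ β`, split off the first `m + 1` terms of the series for `E^ν_{λ,μ}(x)`. Writing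
`n = m + 1`, the `j`-th coefficient of the remainder `x ^ n * R(x)` is that of
`(ν)_n / n! * E^{ν+n}_{λ,λn+μ}` divided by `C(j+n, n)`, which is `1` for `j = 0` and `> 1`
afterwards. As all coefficients are positive, `R(x)` lies strictly between
`(ν)_n / n! * E^{ν+n}_{λ,λn+μ}(0)` and `(ν)_n / n! * E^{ν+n}_{λ,λn+μ}(x)`, and the intermediate
value theorem applied to `ξ ↦ E^{ν+n}_{λ,λn+μ}(ξ ^ β)` produces `ξ`. Continuity comes from the
ratio test: by log-convexity of `Γ`, `Γ(t) / Γ(t + λ) ≤ (t - 1) ^ (-λ) → 0`, so the power series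
has infinite radius.
-/

noncomputable def poch (ν : ℝ) (k : ℕ) : ℝ := ∏ i ∈ Finset.range k, (ν + (i : ℝ))

noncomputable def mittagLeffler (lam mu nu : ℝ) (z : ℝ) : ℝ :=
  ∑' k : ℕ, poch nu k / (Real.Gamma (lam * (k : ℝ) + mu) * (k.factorial : ℝ)) * z ^ k

open Real Filter Topology Set FormalMultilinearSeries Nat

lemma Real.Gamma_div_Gamma_add_le_rpow {t a : ℝ} (ht : 1 < t) (ha : 0 < a) :
    Gamma t / Gamma (t + a) ≤ (t - 1) ^ (-a) := by
  have ht1 : 0 < t - 1 := by linarith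
  have hGt : 0 < Gamma t := Gamma_pos_of_pos (by linarith)
  have hGta : 0 < Gamma (t + a) := Gamma_pos_of_pos (by linarith)
  have hslope := convexOn_log_Gamma.slope_mono_adjacent (x := t - 1) (y := t) (z := t + a)
    (mem_Ioi.2 ht1) (mem_Ioi.2 (by linarith)) (by linarith) (by linarith)
  have hlog : log (Gamma t) - log (Gamma (t - 1)) = log (t - 1) := by
    have h := Gamma_add_one ht1.ne'
    rw [sub_add_cancel] at h
    rw [h, log_mul ht1.ne' (Gamma_pos_of_pos ht1).ne', add_sub_cancel_right]
  simp only [Function.comp_apply, sub_sub_cancel, div_one, add_sub_cancel_left, hlog] at hslope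
  have hexp : a * log (t - 1) ≤ log (Gamma (t + a)) - log (Gamma t) := by
    rwa [le_div_iff₀ ha, mul_comm] at hslope
  calc Gamma t / Gamma (t + a) = exp (-(log (Gamma (t + a)) - log (Gamma t))) := by
        rw [neg_sub, exp_sub, exp_log hGt, exp_log hGta]
    _ ≤ exp (log (t - 1) * -a) := exp_le_exp.2 (by linarith)
    _ = (t - 1) ^ (-a) := (rpow_def_of_pos ht1 _).symm

lemma Real.tendsto_Gamma_div_Gamma_add_atTop {a : ℝ} (ha : 0 < a) :
    Tendsto (fun t => Gamma t / Gamma (t + a)) atTop (𝓝 0) := by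
  have hlim : Tendsto (fun t : ℝ => (t - 1) ^ (-a)) atTop (𝓝 0) :=
    (tendsto_rpow_neg_atTop ha).comp (tendsto_atTop_add_const_right _ (-1) tendsto_id)
  refine tendsto_of_tendsto_of_tendsto_of_le_of_le' tendsto_const_nhds hlim ?_ ?_
  · filter_upwards [eventually_gt_atTop 0] with t ht
    exact div_nonneg (Gamma_pos_of_pos ht).le (Gamma_pos_of_pos (by linarith)).le
  · filter_upwards [eventually_gt_atTop 1] with t ht using Gamma_div_Gamma_add_le_rpow ht ha

lemma poch_pos {ν : ℝ} (hν : 0 < ν) (k : ℕ) : 0 < poch ν k :=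
  Finset.prod_pos fun i _ => by positivity

lemma poch_succ (ν : ℝ) (k : ℕ) : poch ν (k + 1) = poch ν k * (ν + k) :=
  Finset.prod_range_succ _ _

lemma poch_add (ν : ℝ) (a b : ℕ) : poch ν (a + b) = poch ν a * poch (ν + a) b := by
  rw [poch, Finset.prod_range_add]
  congr 1
  refine Finset.prod_congr rfl fun i _ => ?_
  push_cast
  ring

noncomputable def mittagLefflerCoeff (lam mu nu : ℝ) (k : ℕ) : ℝ :=
  poch nu k / (Gamma (lam * k + mu) * k !)

section Coeff

variable {lam mu nu : ℝ}

lemma mittagLefflerCoeff_pos (hlam : 0 ≤ lam) (hmu : 0 < mu) (hnu : 0 < nu) (k : ℕ) :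
    0 < mittagLefflerCoeff lam mu nu k := by
  have := Gamma_pos_of_pos (by positivity : 0 < lam * k + mu)
  have := poch_pos hnu k
  unfold mittagLefflerCoeff
  positivity

lemma mittagLefflerCoeff_succ_div (hlam : 0 ≤ lam) (hmu : 0 < mu) (hnu : 0 < nu) (k : ℕ) :
    mittagLefflerCoeff lam mu nu (k + 1) / mittagLefflerCoeff lam mu nu k =
      (nu + k) / (k + 1) * (Gamma (lam * k + mu) / Gamma (lam * k + mu + lam)) := by
  have := Gamma_pos_of_pos (by positivity : 0 < lam * k + mu)
  have := Gamma_pos_of_pos (by positivity : 0 < lam * k + mu + lam)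
  have := poch_pos hnu k
  simp only [mittagLefflerCoeff, poch_succ, factorial_succ]
  push_cast
  rw [show lam * (k + 1) + mu = lam * k + mu + lam by ring]
  field_simp

lemma tendsto_mittagLefflerCoeff_ratio (hlam : 0 < lam) (hmu : 0 < mu) (hnu : 0 < nu) :
    Tendsto (fun k => ‖mittagLefflerCoeff lam mu nu (k + 1)‖ / ‖mittagLefflerCoeff lam mu nu k‖)
      atTop (𝓝 0) := by
  have hGamma : Tendsto (fun k : ℕ => Gamma (lam * k + mu) / Gamma (lam * k + mu + lam))
      atTop (𝓝 0) :=
    (tendsto_Gamma_div_Gamma_add_atTop hlam).comp <|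
      (tendsto_natCast_atTop_atTop.const_mul_atTop hlam).atTop_add tendsto_const_nhds
  have hbound := hGamma.const_mul (nu + 1)
  rw [mul_zero] at hbound
  refine tendsto_of_tendsto_of_tendsto_of_le_of_le tendsto_const_nhds hbound
    (fun k => by positivity) fun k => ?_
  have := Gamma_pos_of_pos (by positivity : 0 < lam * k + mu)
  have := Gamma_pos_of_pos (by positivity : 0 < lam * k + mu + lam)
  simp only [norm_of_nonneg (mittagLefflerCoeff_pos hlam.le hmu hnu _).le,
    mittagLefflerCoeff_succ_div hlam.le hmu hnu]
  gcongr
  rw [div_le_iff₀ (by positivity)]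
  nlinarith [(Nat.cast_nonneg k : (0 : ℝ) ≤ k)]

lemma radius_ofScalars_mittagLefflerCoeff (hlam : 0 < lam) (hmu : 0 < mu) (hnu : 0 < nu) :
    (ofScalars ℝ (mittagLefflerCoeff lam mu nu)).radius = ⊤ :=
  ofScalars_radius_eq_top_of_tendsto ℝ _
    (Eventually.of_forall fun k => (mittagLefflerCoeff_pos hlam.le hmu hnu k).ne')
    (tendsto_mittagLefflerCoeff_ratio hlam hmu hnu)

lemma mittagLeffler_apply (x : ℝ) :
    mittagLeffler lam mu nu x = ∑' k, mittagLefflerCoeff lam mu nu k * x ^ k :=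
  rfl

lemma mittagLeffler_eq_ofScalarsSum :
    mittagLeffler lam mu nu = ofScalarsSum (mittagLefflerCoeff lam mu nu) := by
  ext x
  simp only [mittagLeffler_apply, ofScalars_sum_eq, smul_eq_mul]

lemma summable_mittagLeffler (hlam : 0 < lam) (hmu : 0 < mu) (hnu : 0 < nu) (x : ℝ) :
    Summable fun k => mittagLefflerCoeff lam mu nu k * x ^ k := by
  have := (ofScalars ℝ (mittagLefflerCoeff lam mu nu)).summable (x := x)
    (by simp [radius_ofScalars_mittagLefflerCoeff hlam hmu hnu])
  simpa only [ofScalars_apply_eq', smul_eq_mul] using this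

lemma continuous_mittagLeffler (hlam : 0 < lam) (hmu : 0 < mu) (hnu : 0 < nu) :
    Continuous (mittagLeffler lam mu nu) := by
  have hr := radius_ofScalars_mittagLefflerCoeff hlam hmu hnu
  have := ((ofScalars ℝ (mittagLefflerCoeff lam mu nu)).hasFPowerSeriesOnBall
    (by simp [hr])).continuousOn
  rw [hr] at this
  rw [mittagLeffler_eq_ofScalarsSum, ofScalarsSum, ← continuousOn_univ]
  simpa using this

lemma mittagLeffler_zero : mittagLeffler lam mu nu 0 = mittagLefflerCoeff lam mu nu 0 := by
  simp [mittagLeffler_eq_ofScalarsSum, ofScalarsSum_zero]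

lemma mittagLefflerCoeff_add_mul_choose (j n : ℕ) :
    mittagLefflerCoeff lam mu nu (j + n) * (j + n).choose n =
      poch nu n / n ! * mittagLefflerCoeff lam (lam * n + mu) (nu + n) j := by
  have hfac : ((j + n).choose n : ℝ) * j ! * n ! = (j + n) ! := by
    exact_mod_cast add_choose_mul_factorial_mul_factorial j n
  have hC : ((j + n).choose n : ℝ) ≠ 0 := by exact_mod_cast (choose_pos (by omega)).ne'
  have harg : lam * ((j + n : ℕ) : ℝ) + mu = lam * j + (lam * n + mu) := by push_cast; ring
  have hpoch : poch nu (j + n) = poch nu n * poch (nu + n) j := by rw [add_comm, poch_add]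
  rw [mittagLefflerCoeff, mittagLefflerCoeff, ← hfac, harg, hpoch]
  field_simp

lemma mittagLefflerCoeff_add_le (hlam : 0 ≤ lam) (hmu : 0 < mu) (hnu : 0 < nu) (j n : ℕ) :
    mittagLefflerCoeff lam mu nu (j + n) ≤
      poch nu n / n ! * mittagLefflerCoeff lam (lam * n + mu) (nu + n) j := by
  rw [← mittagLefflerCoeff_add_mul_choose]
  exact le_mul_of_one_le_right (mittagLefflerCoeff_pos hlam hmu hnu _).le
    (by exact_mod_cast choose_pos (by omega))

lemma mittagLefflerCoeff_add_lt (hlam : 0 ≤ lam) (hmu : 0 < mu) (hnu : 0 < nu) {j n : ℕ}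
    (hj : 0 < j) (hn : 0 < n) :
    mittagLefflerCoeff lam mu nu (j + n) <
      poch nu n / n ! * mittagLefflerCoeff lam (lam * n + mu) (nu + n) j := by
  rw [← mittagLefflerCoeff_add_mul_choose]
  have hchoose : n + 1 ≤ (j + n).choose n :=
    choose_succ_self_right n ▸ choose_le_choose n (by omega)
  exact lt_mul_of_one_lt_right (mittagLefflerCoeff_pos hlam hmu hnu _)
    (by exact_mod_cast (by omega : 1 < (j + n).choose n))

end Coeff

noncomputable def mittagLefflerTail (lam mu nu : ℝ) (n : ℕ) (x : ℝ) : ℝ :=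
  ∑' j : ℕ, mittagLefflerCoeff lam mu nu (j + n) * x ^ j

section Tail

variable {lam mu nu : ℝ}

lemma mittagLeffler_eq_sum_add_tail (hlam : 0 < lam) (hmu : 0 < mu) (hnu : 0 < nu) (n : ℕ)
    (x : ℝ) :
    mittagLeffler lam mu nu x = ∑ k ∈ Finset.range n, mittagLefflerCoeff lam mu nu k * x ^ k +
      x ^ n * mittagLefflerTail lam mu nu n x := by
  rw [mittagLeffler_apply, mittagLefflerTail, ← tsum_mul_left]
  refine ((summable_mittagLeffler hlam hmu hnu x).sum_add_tsum_nat_add n).symm.trans ?_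
  congr 1
  refine tsum_congr fun j => ?_
  ring

lemma summable_mittagLefflerTail (hlam : 0 < lam) (hmu : 0 < mu) (hnu : 0 < nu) (n : ℕ)
    {x : ℝ} (hx : 0 ≤ x) :
    Summable fun j => mittagLefflerCoeff lam mu nu (j + n) * x ^ j := by
  refine .of_nonneg_of_le (fun j => mul_nonneg (mittagLefflerCoeff_pos hlam.le hmu hnu _).le
    (pow_nonneg hx j)) (fun j => mul_le_mul_of_nonneg_right
      (mittagLefflerCoeff_add_le hlam.le hmu hnu j n) (pow_nonneg hx j)) ?_
  simpa only [mul_assoc] using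
    (summable_mittagLeffler hlam (by positivity) (by positivity) x).mul_left (poch nu n / n !)

lemma mul_mittagLeffler_zero_lt_mittagLefflerTail (hlam : 0 < lam) (hmu : 0 < mu)
    (hnu : 0 < nu) (n : ℕ) {x : ℝ} (hx : 0 < x) :
    poch nu n / n ! * mittagLeffler lam (lam * n + mu) (nu + n) 0 <
      mittagLefflerTail lam mu nu n x := by
  have hsum := summable_mittagLefflerTail hlam hmu hnu n hx.le
  have hzero : poch nu n / n ! * mittagLeffler lam (lam * n + mu) (nu + n) 0 =
      mittagLefflerCoeff lam mu nu n := by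
    rw [mittagLeffler_zero, ← mittagLefflerCoeff_add_mul_choose, zero_add, choose_self, cast_one,
      mul_one]
  rw [hzero, mittagLefflerTail, hsum.tsum_eq_zero_add, zero_add, pow_zero, mul_one,
    lt_add_iff_pos_right]
  exact ((summable_nat_add_iff 1).2 hsum).tsum_pos
    (fun j => mul_nonneg (mittagLefflerCoeff_pos hlam.le hmu hnu _).le (pow_nonneg hx.le _)) 0
    (mul_pos (mittagLefflerCoeff_pos hlam.le hmu hnu _) (pow_pos hx _))

lemma mittagLefflerTail_lt_mul_mittagLeffler (hlam : 0 < lam) (hmu : 0 < mu) (hnu : 0 < nu)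
    {n : ℕ} (hn : 0 < n) {x : ℝ} (hx : 0 < x) :
    mittagLefflerTail lam mu nu n x <
      poch nu n / n ! * mittagLeffler lam (lam * n + mu) (nu + n) x := by
  rw [mittagLefflerTail, mittagLeffler_apply, ← tsum_mul_left]
  refine Summable.tsum_lt_tsum (i := 1) (fun j => ?_) ?_
    (summable_mittagLefflerTail hlam hmu hnu n hx.le)
    ((summable_mittagLeffler hlam (by positivity) (by positivity) x).mul_left _)
  · rw [← mul_assoc]
    exact mul_le_mul_of_nonneg_right (mittagLefflerCoeff_add_le hlam.le hmu hnu j n)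
      (pow_nonneg hx.le j)
  · rw [← mul_assoc]
    exact mul_lt_mul_of_pos_right (mittagLefflerCoeff_add_lt hlam.le hmu hnu one_pos hn)
      (pow_pos hx 1)

lemma exists_mittagLeffler_rpow_eq {β z y : ℝ} (hlam : 0 < lam) (hmu : 0 < mu)
    (hnu : 0 < nu) (hβ : 0 < β) (hz : 0 < z) (h0 : mittagLeffler lam mu nu 0 < y)
    (hz' : y < mittagLeffler lam mu nu (z ^ β)) :
    ∃ ξ ∈ Ioo 0 z, mittagLeffler lam mu nu (ξ ^ β) = y := by
  have hcont : ContinuousOn (fun ξ => mittagLeffler lam mu nu (ξ ^ β)) (Icc 0 z) :=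
    ((continuous_mittagLeffler hlam hmu hnu).comp (continuous_rpow_const hβ.le)).continuousOn
  have h0' : mittagLeffler lam mu nu ((0 : ℝ) ^ β) < y := by rwa [zero_rpow hβ.ne']
  exact intermediate_value_Ioo hz.le hcont ⟨h0', hz'⟩

end Tail

/-- Generalized Taylor expansion of the generalized Mittag-Leffler function
(Section 4, Example 2). -/
theorem mittagLeffler_taylor (lam mu nu β : ℝ) (m : ℕ) (z : ℝ)
    (hlam : 0 < lam) (hmu : 0 < mu) (hnu : 0 < nu) (hβ : 0 < β) (hz : 0 < z) :
    ∃ ξ ∈ Set.Ioo 0 z,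
      mittagLeffler lam mu nu (z ^ β)
        = (∑ j ∈ Finset.range (m + 1),
            poch nu j / (Real.Gamma (lam * (j : ℝ) + mu) * (j.factorial : ℝ)) *
              z ^ (β * (j : ℝ)))
          + poch nu (m + 1) / ((m + 1).factorial : ℝ) * z ^ (β * ((m : ℝ) + 1)) *
              mittagLeffler lam (lam * ((m : ℝ) + 1) + mu) (nu + (m : ℝ) + 1) (ξ ^ β) := by
  set x := z ^ β
  have hx : 0 < x := rpow_pos_of_pos hz β
  have hpow (j : ℕ) : z ^ (β * j) = x ^ j := by rw [rpow_mul hz.le, rpow_natCast]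
  have hK : 0 < poch nu (m + 1) / (m + 1)! := div_pos (poch_pos hnu _) (by positivity)
  have hlow := mul_mittagLeffler_zero_lt_mittagLefflerTail hlam hmu hnu (m + 1) hx
  have hhigh := mittagLefflerTail_lt_mul_mittagLeffler hlam hmu hnu m.succ_pos hx
  push_cast [← add_assoc] at hlow hhigh
  obtain ⟨ξ, hξ, hξeq⟩ := exists_mittagLeffler_rpow_eq hlam (by positivity) (by positivity) hβ hz
    ((lt_div_iff₀' hK).2 hlow) ((div_lt_iff₀' hK).2 hhigh)
  refine ⟨ξ, hξ, ?_⟩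
  rw [mittagLeffler_eq_sum_add_tail hlam hmu hnu (m + 1), hξeq, ← Nat.cast_succ, hpow,
    mul_right_comm, mul_div_cancel₀ _ hK.ne', mul_comm]
  exact congrArg (· + _) (Finset.sum_congr rfl fun j _ => by rw [hpow]; rfl)
end

section
/- Series solution of the basic generalized fractional differential equation (Section 5, Example 1): Let ρ > 0, 0 < α ≤ 1, a ≥ 0, λ ∈ ℝ and u_a ∈ ℝ. Define u(x) = u_a · Σ_{n=0}^{∞} λ^n ((x^ρ − a^ρ)/ρ)^{nα} / Γ(nα+1) for x ≥ a. Then u(a) = u_a and for every x > a, (C^{α,ρ}_{a+} u)(x) = λ · u(x). -/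
/-!
Write `w(x) = (x^ρ - a^ρ)/ρ` and `E(t) = E_α(λ t^α) = ∑ λⁿ t^{nα} / Γ(nα + 1)`, so that
`u = u_a E(w)`. Term-wise differentiation gives `E'(t) = λ t^{α-1} E_{α,α}(λ t^α)`, and
the substitution `s = w(τ)`, under which `τ^{ρ-1} dτ = ds` and `x^ρ - τ^ρ = ρ (w(x) - s)`,
turns the Katugampola–Caputo derivative into the classical Caputo derivative with base
point `0`. Integrating the series term by term with Euler's Beta integral
`∫₀^W s^{p-1} (W - s)^{-α} ds = W^{p-α} Γ(p) Γ(1-α) / Γ(p+1-α)` lowers the index of every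
term by one and returns `λ E(w(x))`. All series converge by the ratio test and Gautschi's inequality
`Γ(y) (y + α - 1)^α ≤ Γ(y + α)`, a consequence of the log-convexity of `Γ`.
-/

/-- The left generalized (Katugampola) Caputo-type fractional derivative of order `α`
(with `0 < α ≤ 1`), parameter `ρ > 0` and base point `a`. -/
noncomputable def genCaputoL (ρ α a : ℝ) (f : ℝ → ℝ) : ℝ → ℝ :=
  if α = 1 then fun x => x ^ (1 - ρ) * deriv f x
  else fun x => ρ ^ α / Real.Gamma (1 - α) * ∫ τ in a..x, deriv f τ * (x ^ ρ - τ ^ ρ) ^ (-α)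

open Real Set Filter MeasureTheory

lemma Real.Gamma_mul_rpow_le_Gamma_add {α y : ℝ} (hα0 : 0 < α) (hα1 : α ≤ 1)
    (hy : 1 - α < y) :
    Gamma y * (y + α - 1) ^ α ≤ Gamma (y + α) := by
  have hz : 0 < y + α - 1 := by linarith
  have hΓz := Gamma_pos_of_pos hz
  have hconv := convexOn_log_Gamma.2 (mem_Ioi.2 (by linarith : 0 < y + α)) (mem_Ioi.2 hz)
    (sub_nonneg.2 hα1) hα0.le (sub_add_cancel 1 α)
  have hrec : Gamma (y + α) = (y + α - 1) * Gamma (y + α - 1) := by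
    rw [← Gamma_add_one hz.ne', sub_add_cancel]
  simp only [smul_eq_mul, Function.comp_apply] at hconv
  rw [show (1 - α) * (y + α) + α * (y + α - 1) = y by ring, hrec,
    log_mul hz.ne' hΓz.ne'] at hconv
  have hΓy := Gamma_pos_of_pos (by linarith : 0 < y)
  rw [hrec, ← log_le_log_iff (by positivity) (mul_pos hz hΓz), log_mul hΓy.ne' (by positivity),
    log_rpow hz, log_mul hz.ne' hΓz.ne']
  linarith

-- Also valid at the poles of `Γ`, where Mathlib's `Gamma` vanishes.
lemma Real.inv_Gamma_eq_mul_inv_Gamma_add_one (s : ℝ) :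
    (Gamma s)⁻¹ = s * (Gamma (s + 1))⁻¹ := by
  rcases eq_or_ne s 0 with rfl | hs
  · simp [Gamma_zero]
  · rw [Gamma_add_one hs, mul_inv, ← mul_assoc, mul_inv_cancel₀ hs, one_mul]

lemma summable_pow_div_Gamma {α : ℝ} (hα0 : 0 < α) (hα1 : α ≤ 1) (r d : ℝ) :
    Summable fun n : ℕ => r ^ n / Gamma (n * α + d) := by
  refine summable_of_ratio_norm_eventually_le (r := 1 / 2) (by norm_num) ?_
  have hlarge : Tendsto (fun n : ℕ => (n : ℝ) * α + d) atTop atTop :=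
    tendsto_atTop_add_const_right _ _ (tendsto_natCast_atTop_atTop.atTop_mul_const hα0)
  filter_upwards [hlarge.eventually_ge_atTop (max (2 - α) ((2 * ‖r‖) ^ α⁻¹ + 1 - α))]
    with n hn
  set y := (n : ℝ) * α + d
  have hy : 1 - α < y := by linarith [le_max_left (2 - α) ((2 * ‖r‖) ^ α⁻¹ + 1 - α)]
  have hΓy : 0 < Gamma y := Gamma_pos_of_pos (by linarith)
  have hr : 2 * ‖r‖ ≤ (y + α - 1) ^ α := by
    calc 2 * ‖r‖ = ((2 * ‖r‖) ^ α⁻¹) ^ α := by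
          rw [← rpow_mul (by positivity), inv_mul_cancel₀ hα0.ne', rpow_one]
      _ ≤ (y + α - 1) ^ α := by
          gcongr
          linarith [le_max_right (2 - α) ((2 * ‖r‖) ^ α⁻¹ + 1 - α)]
  have hΓ : Gamma y * (2 * ‖r‖) ≤ Gamma (y + α) :=
    (mul_le_mul_of_nonneg_left hr hΓy.le).trans (Gamma_mul_rpow_le_Gamma_add hα0 hα1 hy)
  have hcast : ((n + 1 : ℕ) : ℝ) * α + d = y + α := by push_cast; ring
  have hΓyα : 0 < Gamma (y + α) := Gamma_pos_of_pos (by linarith)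
  rw [hcast, norm_div, norm_div, norm_pow, norm_pow, Real.norm_of_nonneg hΓy.le,
    Real.norm_of_nonneg hΓyα.le, div_le_iff₀ hΓyα, pow_succ]
  calc ‖r‖ ^ n * ‖r‖ = 1 / 2 * (‖r‖ ^ n / Gamma y) * (Gamma y * (2 * ‖r‖)) := by
        field_simp
    _ ≤ _ := by gcongr

lemma setIntegral_rpow_mul_sub_rpow {p q L : ℝ} (hp : 0 < p) (hq : 0 < q) (hL : 0 < L) :
    ∫ s in Ioo 0 L, s ^ (p - 1) * (L - s) ^ (q - 1) =
      L ^ (p + q - 1) * (Gamma p * Gamma q / Gamma (p + q)) := by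
  rw [← integral_Ioc_eq_integral_Ioo, ← intervalIntegral.integral_of_le hL.le]
  apply Complex.ofReal_injective
  rw [← intervalIntegral.integral_ofReal]
  calc ∫ s in (0 : ℝ)..L, ((s ^ (p - 1) * (L - s) ^ (q - 1) : ℝ) : ℂ)
      = ∫ s in (0 : ℝ)..L, (s : ℂ) ^ ((p : ℂ) - 1) * ((L : ℂ) - s) ^ ((q : ℂ) - 1) := by
        refine intervalIntegral.integral_congr fun s hs => ?_
        rw [uIcc_of_le hL.le] at hs
        push_cast [Complex.ofReal_cpow hs.1, Complex.ofReal_cpow (sub_nonneg.2 hs.2)]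
        rfl
    _ = _ := by
        rw [Complex.betaIntegral_scaled _ _ hL, Complex.betaIntegral_eq_Gamma_mul_div _ _
          (by simpa using hp) (by simpa using hq)]
        push_cast [Complex.ofReal_cpow hL.le, ← Complex.Gamma_ofReal]
        rfl

lemma integrableOn_rpow_mul_sub_rpow {p q L : ℝ} (hp : 0 < p) (hq : 0 < q) (hL : 0 < L) :
    IntegrableOn (fun s => s ^ (p - 1) * (L - s) ^ (q - 1)) (Ioo 0 L) :=
  -- a nonzero Bochner integral certifies integrability
  Integrable.of_integral_ne_zero <| by
    rw [setIntegral_rpow_mul_sub_rpow hp hq hL]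
    have := Gamma_pos_of_pos hp; have := Gamma_pos_of_pos hq
    have := Gamma_pos_of_pos (add_pos hp hq)
    positivity

lemma rpow_le_rpow_add_rpow_of_mem_Icc {c d y : ℝ} (hc : 0 < c) (hy : y ∈ Icc c d) (e : ℝ) :
    y ^ e ≤ c ^ e + d ^ e := by
  have hd : 0 < d := hc.trans_le (hy.1.trans hy.2)
  rcases le_total 0 e with he | he
  · exact (rpow_le_rpow (hc.le.trans hy.1) hy.2 he).trans
      (le_add_of_nonneg_left (by positivity))
  · exact (rpow_le_rpow_of_nonpos hc hy.1 he).trans (le_add_of_nonneg_right (by positivity))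

/-- `mittagLefflerPow α β λ t = t ^ (β - 1) * E_{α,β}(λ t ^ α)` for `t > 0`, where
`E_{α,β}(z) = ∑ zⁿ / Γ(nα + β)` is the two-parameter Mittag-Leffler function. -/
noncomputable def mittagLefflerPow (α β lam t : ℝ) : ℝ :=
  ∑' n : ℕ, lam ^ n * t ^ ((n : ℝ) * α + β - 1) / Gamma ((n : ℝ) * α + β)

section MittagLeffler

variable {α : ℝ}

lemma summable_mittagLefflerPow (hα0 : 0 < α) (hα1 : α ≤ 1) (β lam : ℝ) {t : ℝ}
    (ht : 0 < t) :
    Summable fun n : ℕ => lam ^ n * t ^ ((n : ℝ) * α + β - 1) / Gamma ((n : ℝ) * α + β) := by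
  refine ((summable_pow_div_Gamma hα0 hα1 (lam * t ^ α) β).mul_left (t ^ (β - 1))).congr
    fun n => ?_
  rw [add_sub_assoc, rpow_add ht, mul_comm (n : ℝ), rpow_mul ht.le, rpow_natCast, mul_pow]
  ring

lemma mittagLefflerPow_eq_add (hα0 : 0 < α) (hα1 : α ≤ 1) (β lam : ℝ) {t : ℝ} (ht : 0 < t) :
    mittagLefflerPow α β lam t =
      t ^ (β - 1) / Gamma β + lam * mittagLefflerPow α (β + α) lam t := by
  rw [mittagLefflerPow, (summable_mittagLefflerPow hα0 hα1 β lam ht).tsum_eq_zero_add,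
    mittagLefflerPow, ← tsum_mul_left]
  congr 1
  · simp
  · refine tsum_congr fun n => ?_
    push_cast
    ring_nf

lemma mittagLefflerPow_zero (hα0 : 0 < α) (hα1 : α ≤ 1) (lam : ℝ) {t : ℝ} (ht : 0 < t) :
    mittagLefflerPow α 0 lam t = lam * mittagLefflerPow α α lam t := by
  rw [mittagLefflerPow_eq_add hα0 hα1 0 lam ht, Gamma_zero, div_zero, zero_add, zero_add]

lemma mittagLefflerPow_one_zero (hα : α ≠ 0) (lam : ℝ) : mittagLefflerPow α 1 lam 0 = 1 := by
  rw [mittagLefflerPow, tsum_eq_single 0]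
  · simp
  · intro n hn
    rw [add_sub_cancel_right, zero_rpow (by positivity), mul_zero, zero_div]

lemma hasDerivAt_mittagLefflerPow_term (β lam : ℝ) (n : ℕ) {y : ℝ} (hy : 0 < y) :
    HasDerivAt (fun t => lam ^ n * t ^ ((n : ℝ) * α + β - 1) / Gamma ((n : ℝ) * α + β))
      (lam ^ n * y ^ ((n : ℝ) * α + (β - 1) - 1) / Gamma ((n : ℝ) * α + (β - 1))) y := by
  have h := ((hasDerivAt_rpow_const (p := (n : ℝ) * α + β - 1) (Or.inl hy.ne')).const_mul
    (lam ^ n)).div_const (Gamma ((n : ℝ) * α + β))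
  refine h.congr_deriv ?_
  rw [div_eq_mul_inv, div_eq_mul_inv, ← add_sub_assoc,
    inv_Gamma_eq_mul_inv_Gamma_add_one ((n : ℝ) * α + β - 1), sub_add_cancel]
  ring

lemma hasDerivAt_mittagLefflerPow (hα0 : 0 < α) (hα1 : α ≤ 1) (β lam : ℝ) {t : ℝ}
    (ht : 0 < t) :
    HasDerivAt (mittagLefflerPow α β lam) (mittagLefflerPow α (β - 1) lam t) t := by
  have hmem : t ∈ Ioo (t / 2) (2 * t) := ⟨by linarith, by linarith⟩
  have hbound := (summable_mittagLefflerPow hα0 hα1 (β - 1) lam (half_pos ht)).norm.add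
    (summable_mittagLefflerPow hα0 hα1 (β - 1) lam (mul_pos two_pos ht)).norm
  refine hasDerivAt_tsum_of_isPreconnected hbound isOpen_Ioo isPreconnected_Ioo
    (fun n y hy => hasDerivAt_mittagLefflerPow_term β lam n ((half_pos ht).trans hy.1))
    (fun n y hy => ?_) hmem (summable_mittagLefflerPow hα0 hα1 β lam ht) hmem
  simp only [norm_div, norm_mul, norm_pow, ← add_div, ← mul_add]
  gcongr
  rw [norm_of_nonneg (rpow_nonneg (half_pos ht |>.le.trans hy.1.le) _),
    norm_of_nonneg (rpow_nonneg (half_pos ht).le _),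
    norm_of_nonneg (rpow_nonneg (by positivity) _)]
  exact rpow_le_rpow_add_rpow_of_mem_Icc (half_pos ht) (Ioo_subset_Icc_self hy) _

lemma setIntegral_mittagLefflerPow_mul_rpow (hα0 : 0 < α) (hα1 : α ≤ 1) (lam : ℝ)
    {β μ W : ℝ} (hβ : 0 < β) (hμ : 0 < μ) (hW : 0 < W) :
    ∫ s in Ioo 0 W, mittagLefflerPow α β lam s * (W - s) ^ (μ - 1) =
      Gamma μ * mittagLefflerPow α (β + μ) lam W := by
  set c : ℕ → ℝ := fun n => lam ^ n / Gamma ((n : ℝ) * α + β)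
  set g : ℕ → ℝ → ℝ := fun n s => s ^ ((n : ℝ) * α + β - 1) * (W - s) ^ (μ - 1)
  have hp (n : ℕ) : 0 < (n : ℝ) * α + β := by positivity
  have hg_nonneg (n : ℕ) : ∀ s ∈ Ioo 0 W, 0 ≤ g n s := fun s hs =>
    mul_nonneg (rpow_nonneg hs.1.le _) (rpow_nonneg (sub_nonneg.2 hs.2.le) _)
  have hg (n : ℕ) : c n * ∫ s in Ioo 0 W, g n s =
      Gamma μ *
        (lam ^ n * W ^ ((n : ℝ) * α + (β + μ) - 1) / Gamma ((n : ℝ) * α + (β + μ))) := by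
    have := Gamma_pos_of_pos (hp n)
    simp only [c, g]
    rw [setIntegral_rpow_mul_sub_rpow (hp n) hμ hW, add_assoc]
    field_simp
  have hnorm (n : ℕ) : ∫ s in Ioo 0 W, ‖c n * g n s‖ = ‖c n * ∫ s in Ioo 0 W, g n s‖ := by
    rw [norm_mul, norm_of_nonneg (setIntegral_nonneg measurableSet_Ioo (hg_nonneg n)),
      ← integral_const_mul]
    refine setIntegral_congr_fun measurableSet_Ioo fun s hs => ?_
    rw [norm_mul, norm_of_nonneg (hg_nonneg n s hs)]
  have hsum := hasSum_integral_of_summable_integral_norm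
    (fun n => (integrableOn_rpow_mul_sub_rpow (hp n) hμ hW).const_mul (c n))
    (((summable_mittagLefflerPow hα0 hα1 (β + μ) lam hW).mul_left (Gamma μ)).norm.congr
      fun n => by rw [hnorm, hg])
  rw [mittagLefflerPow, ← tsum_mul_left, ← tsum_congr hg]
  simp_rw [← integral_const_mul]
  rw [hsum.tsum_eq]
  refine setIntegral_congr_fun measurableSet_Ioo fun s _ => ?_
  rw [mittagLefflerPow, ← tsum_mul_right]
  exact tsum_congr fun n => by simp only [c]; ring

end MittagLeffler

lemma hasDerivAt_rpow_sub_div {ρ τ : ℝ} (hρ : ρ ≠ 0) (hτ : 0 < τ) (c : ℝ) :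
    HasDerivAt (fun y => (y ^ ρ - c) / ρ) (τ ^ (ρ - 1)) τ := by
  have h := ((hasDerivAt_rpow_const (p := ρ) (Or.inl hτ.ne')).sub_const c).div_const ρ
  rwa [mul_div_cancel_left₀ _ hρ] at h

lemma setIntegral_Ioo_comp_rpow_sub_div {ρ a x : ℝ} (hρ : 0 < ρ) (ha : 0 ≤ a) (hax : a < x)
    (g : ℝ → ℝ) :
    ∫ τ in Ioo a x, g ((τ ^ ρ - a ^ ρ) / ρ) * τ ^ (ρ - 1) =
      ∫ s in Ioo 0 ((x ^ ρ - a ^ ρ) / ρ), g s := by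
  set w : ℝ → ℝ := fun τ => (τ ^ ρ - a ^ ρ) / ρ
  have hmono : StrictMonoOn w (Icc a x) := fun s hs t ht hst => by
    simp only [w]; gcongr; exact ha.trans hs.1
  have hcont : ContinuousOn w (Icc a x) := fun τ hτ =>
    (((continuousAt_id.rpow_const (Or.inr hρ.le)).sub continuousAt_const).div_const
      ρ).continuousWithinAt
  have himage : w '' Ioo a x = Ioo 0 ((x ^ ρ - a ^ ρ) / ρ) := by
    rw [hcont.image_Ioo_of_strictMonoOn hax.le hmono]; simp [w]
  have hderiv : ∀ τ ∈ Ioo a x, HasDerivWithinAt w (τ ^ (ρ - 1)) (Ioo a x) τ := fun τ hτ =>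
    (hasDerivAt_rpow_sub_div hρ.ne' (ha.trans_lt hτ.1) _).hasDerivWithinAt
  rw [← himage, integral_image_eq_integral_abs_deriv_smul measurableSet_Ioo hderiv
    (hmono.injOn.mono Ioo_subset_Icc_self)]
  refine setIntegral_congr_fun measurableSet_Ioo fun τ hτ => ?_
  rw [abs_of_pos (rpow_pos_of_pos (ha.trans_lt hτ.1) _), smul_eq_mul, mul_comm]

lemma integral_deriv_mul_rpow_sub_rpow {ρ α a x : ℝ} {f φ : ℝ → ℝ} (hρ : 0 < ρ) (ha : 0 ≤ a)
    (hax : a < x) (hf : ∀ τ ∈ Ioo a x, deriv f τ = φ ((τ ^ ρ - a ^ ρ) / ρ) * τ ^ (ρ - 1)) :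
    ∫ τ in a..x, deriv f τ * (x ^ ρ - τ ^ ρ) ^ (-α) =
      ρ ^ (-α) *
        ∫ s in Ioo 0 ((x ^ ρ - a ^ ρ) / ρ), φ s * ((x ^ ρ - a ^ ρ) / ρ - s) ^ (-α) := by
  rw [intervalIntegral.integral_of_le hax.le, integral_Ioc_eq_integral_Ioo,
    ← integral_const_mul, ← setIntegral_Ioo_comp_rpow_sub_div hρ ha hax]
  refine setIntegral_congr_fun measurableSet_Ioo fun τ hτ => ?_
  have hτx : τ ^ ρ ≤ x ^ ρ := by gcongr; exacts [ha.trans hτ.1.le, hτ.2.le]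
  have hsplit : x ^ ρ - τ ^ ρ = ρ * ((x ^ ρ - a ^ ρ) / ρ - (τ ^ ρ - a ^ ρ) / ρ) := by
    field_simp; ring
  rw [hf τ hτ, hsplit,
    mul_rpow hρ.le (sub_nonneg.2 (div_le_div_of_nonneg_right (by linarith) hρ.le))]
  ring

lemma deriv_eq_of_forall_eq_mul_mittagLefflerPow {α ρ a lam ua : ℝ} {u : ℝ → ℝ}
    (hα0 : 0 < α) (hα1 : α ≤ 1) (hρ : 0 < ρ) (ha : 0 ≤ a)
    (hu : ∀ y, a ≤ y → u y = ua * mittagLefflerPow α 1 lam ((y ^ ρ - a ^ ρ) / ρ))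
    {τ : ℝ} (hτ : a < τ) :
    deriv u τ = ua * lam * mittagLefflerPow α α lam ((τ ^ ρ - a ^ ρ) / ρ) * τ ^ (ρ - 1) := by
  have hw : 0 < (τ ^ ρ - a ^ ρ) / ρ := div_pos (sub_pos.2 (by gcongr)) hρ
  have hevent : u =ᶠ[nhds τ] fun y => ua * mittagLefflerPow α 1 lam ((y ^ ρ - a ^ ρ) / ρ) :=
    eventually_of_mem (Ioi_mem_nhds hτ) fun y hy => hu y hy.le
  have hderiv := ((hasDerivAt_mittagLefflerPow hα0 hα1 1 lam hw).comp τ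
    (hasDerivAt_rpow_sub_div hρ.ne' (ha.trans_lt hτ) (a ^ ρ))).const_mul ua
  rw [(hderiv.congr_of_eventuallyEq hevent).deriv, sub_self,
    mittagLefflerPow_zero hα0 hα1 lam hw]
  ring

/-- Series solution of the basic generalized fractional differential equation
`C^{α,ρ}_{a+} u = λ u`, `u(a) = u_a` (Section 5, Example 1): the function
`u(x) = u_a Σ_{n=0}^∞ λⁿ ((x^ρ - a^ρ)/ρ)^{nα} / Γ(nα+1)`
(i.e. `u_a E_α(λ ρ^{-α} (x^ρ - a^ρ)^α)`) satisfies it. -/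
theorem fde_mittagLeffler_solution (ρ α a lam ua : ℝ) (u : ℝ → ℝ)
    (hρ : 0 < ρ) (hα0 : 0 < α) (hα1 : α ≤ 1) (ha : 0 ≤ a)
    (hu : ∀ x, a ≤ x →
      u x = ua * ∑' n : ℕ,
        lam ^ n * ((x ^ ρ - a ^ ρ) / ρ) ^ ((n : ℝ) * α) / Real.Gamma ((n : ℝ) * α + 1)) :
    u a = ua ∧ ∀ x, a < x → genCaputoL ρ α a u x = lam * u x := by
  set w : ℝ → ℝ := fun y => (y ^ ρ - a ^ ρ) / ρ
  have hu' (y : ℝ) (hy : a ≤ y) : u y = ua * mittagLefflerPow α 1 lam (w y) := by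
    simpa only [mittagLefflerPow, add_sub_cancel_right] using hu y hy
  refine ⟨by simp [hu' a le_rfl, w, mittagLefflerPow_one_zero hα0.ne'], fun x hax => ?_⟩
  have hderiv (τ : ℝ) (hτ : a < τ) :=
    deriv_eq_of_forall_eq_mul_mittagLefflerPow hα0 hα1 hρ ha hu' hτ
  have hW : 0 < w x := div_pos (sub_pos.2 (by gcongr)) hρ
  rw [hu' x hax.le]
  rcases hα1.lt_or_eq with hα1' | rfl
  · have hI : ∫ s in Ioo 0 (w x), mittagLefflerPow α α lam s * (w x - s) ^ (-α) =
        Gamma (1 - α) * mittagLefflerPow α 1 lam (w x) := by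
      simpa using setIntegral_mittagLefflerPow_mul_rpow hα0 hα1 lam hα0 (sub_pos.2 hα1') hW
    rw [genCaputoL, if_neg hα1'.ne, integral_deriv_mul_rpow_sub_rpow hρ ha hax
      (φ := fun s => ua * lam * mittagLefflerPow α α lam s) fun τ hτ => hderiv τ hτ.1]
    simp only [mul_assoc, integral_const_mul]
    rw [hI, rpow_neg hρ.le]
    field_simp
  · have hcancel : x ^ (1 - ρ) * x ^ (ρ - 1) = 1 := by
      rw [← rpow_add (ha.trans_lt hax), sub_add_sub_cancel', sub_self, rpow_zero]
    rw [genCaputoL, if_pos rfl, hderiv x hax]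
    linear_combination ua * lam * mittagLefflerPow 1 1 lam (w x) * hcancel
end

section
/- Expansion of the iterated operator γ = x^{1−ρ} d/dx in classical derivatives (Lemma A.1): Let ρ > 0 and j ≥ 1 a natural number, and define the doubly indexed real sequence λ_{i,j} by: λ_{0,j} = 0, λ_{i,j} = 0 for i > j, λ_{j,j} = 1, and λ_{i,j} = λ_{i−1,j−1} + (i − (j−1)ρ)·λ_{i,j−1} for 1 ≤ i < j. If f : ℝ → ℝ is j times continuously differentiable on (0,∞), then for every x > 0: (γ^j f)(x) = Σ_{i=1}^{j} λ_{i,j} · x^{i − jρ} · f^{(i)}(x), where γ^j denotes the j-fold iterate of the operator γ defined by (γ g)(x) = x^{1−ρ} g′(x). -/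
/-!
Induction on `j`. By the product rule,
`γ (x^(i - jρ) f⁽ⁱ⁾) = (i - jρ) x^(i - (j+1)ρ) f⁽ⁱ⁾ + x^(i + 1 - (j+1)ρ) f⁽ⁱ⁺¹⁾`,
so collecting the coefficient of `x^(i - (j+1)ρ) f⁽ⁱ⁾` gives `λ_{i-1,j} + (i - jρ) λ_{i,j}`.
This is the defining recurrence for `i ≤ j`, and also for `i = j + 1`, because `λ_{j+1,j} = 0`
and `λ_{j,j} = λ_{j+1,j+1} = 1`; the boundary terms vanish since `λ_{0,j} = λ_{j+1,j} = 0`.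
-/

/-- The operator `γ = x^(1-ρ) d/dx`. -/
noncomputable def gammaOp (ρ : ℝ) (g : ℝ → ℝ) : ℝ → ℝ := fun x => x ^ (1 - ρ) * deriv g x

open Finset Filter Topology

theorem ContDiffAt.hasDerivAt_iteratedDeriv {f : ℝ → ℝ} {n : WithTop ℕ∞} {i : ℕ} {x : ℝ}
    (hf : ContDiffAt ℝ n f x) (hi : (i : WithTop ℕ∞) < n) :
    HasDerivAt (iteratedDeriv i f) (iteratedDeriv (i + 1) f x) x := by
  rw [iteratedDeriv_succ, iteratedDeriv_eq_equiv_comp]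
  exact ((ContinuousMultilinearMap.piFieldEquiv ℝ (Fin i) ℝ).symm.differentiableAt.comp x
    (hf.differentiableAt_iteratedFDeriv hi)).hasDerivAt

theorem sum_Icc_one_eq_sum_range {M : Type*} [AddCommMonoid M] (g : ℕ → M) (h0 : g 0 = 0)
    (n : ℕ) : ∑ i ∈ Icc 1 n, g i = ∑ i ∈ range (n + 1), g i := by
  rw [sum_range_eq_add_Ico _ (by omega : 0 < n + 1), h0, zero_add, Ico_add_one_right_eq_Icc]

theorem sum_Icc_mul_add_shift {R : Type*} [CommSemiring R] (a w T : ℕ → R) (n : ℕ)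
    (h0 : a 0 = 0) (htop : a (n + 1) = 0) :
    ∑ i ∈ Icc 1 n, a i * (w i * T i + T (i + 1))
      = ∑ i ∈ Icc 1 (n + 1), (a (i - 1) + w i * a i) * T i := by
  rw [sum_Icc_one_eq_sum_range _ (by simp [h0]), sum_Icc_one_eq_sum_range _ (by simp [h0])]
  simp only [add_mul, mul_add, sum_add_distrib]
  rw [sum_range_succ' (fun i => a (i - 1) * T i), sum_range_succ (fun i => w i * a i * T i)]
  simp only [h0, htop, Nat.add_sub_cancel, Nat.zero_sub, mul_zero, zero_mul, add_zero]
  rw [add_comm]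
  congr 1
  exact sum_congr rfl fun i _ => by ring

theorem gammaOp_congr {ρ x : ℝ} {g h : ℝ → ℝ} (hgh : g =ᶠ[𝓝 x] h) :
    gammaOp ρ g x = gammaOp ρ h x := by
  rw [gammaOp, gammaOp, hgh.deriv_eq]

theorem gammaOp_sum {ρ x : ℝ} {ι : Type*} {s : Finset ι} {g : ι → ℝ → ℝ} {g' : ι → ℝ}
    (hg : ∀ i ∈ s, HasDerivAt (g i) (g' i) x) :
    gammaOp ρ (fun y => ∑ i ∈ s, g i y) x = ∑ i ∈ s, x ^ (1 - ρ) * g' i := by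
  rw [gammaOp, (HasDerivAt.fun_sum hg).deriv, mul_sum]

theorem gammaOp_sum_rpow_mul_iteratedDeriv {ρ x : ℝ} (hx : 0 < x) {f : ℝ → ℝ} {N n : ℕ}
    (hf : ContDiffAt ℝ N f x) (hn : n < N) (c : ℕ → ℝ) (b : ℝ) :
    gammaOp ρ (fun y => ∑ i ∈ Icc 1 n, c i * y ^ ((i : ℝ) - b) * iteratedDeriv i f y) x
      = ∑ i ∈ Icc 1 n, c i * (((i : ℝ) - b) * (x ^ ((i : ℝ) - (b + ρ)) * iteratedDeriv i f x)
          + x ^ (((i + 1 : ℕ) : ℝ) - (b + ρ)) * iteratedDeriv (i + 1) f x) := by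
  have hderiv : ∀ i ∈ Icc 1 n, HasDerivAt (fun y => c i * y ^ ((i : ℝ) - b) * iteratedDeriv i f y)
      (c i * (((i : ℝ) - b) * x ^ ((i : ℝ) - b - 1)) * iteratedDeriv i f x
        + c i * x ^ ((i : ℝ) - b) * iteratedDeriv (i + 1) f x) x := fun i hi =>
    ((Real.hasDerivAt_rpow_const (Or.inl hx.ne')).const_mul (c i)).mul
      (hf.hasDerivAt_iteratedDeriv (by exact_mod_cast (mem_Icc.mp hi).2.trans_lt hn))
  rw [gammaOp_sum hderiv]
  refine sum_congr rfl fun i _ => ?_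
  have hpow : ∀ e, x ^ (1 - ρ) * x ^ e = x ^ (e + 1 - ρ) := fun e => by
    rw [← Real.rpow_add hx]; ring_nf
  rw [show ((i : ℝ) - (b + ρ)) = ((i : ℝ) - b - 1) + 1 - ρ by ring,
    show (((i + 1 : ℕ) : ℝ) - (b + ρ)) = ((i : ℝ) - b) + 1 - ρ by push_cast; ring,
    ← hpow, ← hpow]
  ring

theorem lam_succ_eq {ρ : ℝ} {lam : ℕ → ℕ → ℝ} (hgt : ∀ i l, 1 ≤ l → l < i → lam i l = 0)
    (hdiag : ∀ l, 1 ≤ l → lam l l = 1)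
    (hrec : ∀ i l, 1 ≤ i → i < l →
      lam i l = lam (i - 1) (l - 1) + ((i : ℝ) - ((l : ℝ) - 1) * ρ) * lam i (l - 1))
    {n i : ℕ} (hn : 1 ≤ n) (hi1 : 1 ≤ i) (hi : i ≤ n + 1) :
    lam i (n + 1) = lam (i - 1) n + ((i : ℝ) - n * ρ) * lam i n := by
  rcases hi.lt_or_eq with hlt | rfl
  · simpa using hrec i (n + 1) hi1 hlt
  · rw [Nat.add_sub_cancel, hdiag _ (by omega), hdiag n hn, hgt (n + 1) n hn n.lt_succ_self]
    ring

theorem gammaOp_iterate_expansion_general (ρ : ℝ) (j : ℕ) (f : ℝ → ℝ) (lam : ℕ → ℕ → ℝ)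
    (hj : 1 ≤ j)
    (hl0 : ∀ l, 1 ≤ l → lam 0 l = 0)
    (hgt : ∀ i l, 1 ≤ l → l < i → lam i l = 0)
    (hdiag : ∀ l, 1 ≤ l → lam l l = 1)
    (hrec : ∀ i l, 1 ≤ i → i < l →
      lam i l = lam (i - 1) (l - 1) + ((i : ℝ) - ((l : ℝ) - 1) * ρ) * lam i (l - 1))
    (hf : ContDiffOn ℝ j f (Set.Ioi 0)) :
    ∀ x : ℝ, 0 < x →
      (gammaOp ρ)^[j] f x
        = ∑ i ∈ Finset.Icc 1 j, lam i j * x ^ ((i : ℝ) - (j : ℝ) * ρ) * iteratedDeriv i f x := by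
  induction j, hj using Nat.le_induction with
  | base =>
    intro x hx
    simp [gammaOp, hdiag 1 le_rfl]
  | succ n hn ih =>
    intro x hx
    have hev : (gammaOp ρ)^[n] f =ᶠ[𝓝 x]
        fun y => ∑ i ∈ Icc 1 n, lam i n * y ^ ((i : ℝ) - n * ρ) * iteratedDeriv i f y :=
      eventually_of_mem (Ioi_mem_nhds hx) (ih (hf.of_le (by simp)))
    rw [Function.iterate_succ_apply', gammaOp_congr hev,
      gammaOp_sum_rpow_mul_iteratedDeriv hx (hf.contDiffAt (Ioi_mem_nhds hx)) n.lt_succ_self]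
    refine (sum_Icc_mul_add_shift _ _ (fun i => x ^ ((i : ℝ) - (n * ρ + ρ)) * iteratedDeriv i f x)
      n (hl0 n hn) (hgt (n + 1) n hn n.lt_succ_self)).trans (sum_congr rfl fun i hi => ?_)
    obtain ⟨hi1, hi⟩ := mem_Icc.mp hi
    rw [lam_succ_eq hgt hdiag hrec hn hi1 hi]
    push_cast
    ring_nf

/-- Expansion of the iterated operator `γ = x^(1-ρ) d/dx` in classical derivatives
(Lemma A.1). The coefficients `lam i j` are the `λ_{i,j}` of the paper. -/
theorem gammaOp_iterate_expansion (ρ : ℝ) (j : ℕ) (f : ℝ → ℝ) (lam : ℕ → ℕ → ℝ)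
    (hρ : 0 < ρ) (hj : 1 ≤ j)
    (hl0 : ∀ l, 1 ≤ l → lam 0 l = 0)
    (hgt : ∀ i l, 1 ≤ l → l < i → lam i l = 0)
    (hdiag : ∀ l, 1 ≤ l → lam l l = 1)
    (hrec : ∀ i l, 1 ≤ i → i < l →
      lam i l = lam (i - 1) (l - 1) + ((i : ℝ) - ((l : ℝ) - 1) * ρ) * lam i (l - 1))
    (hf : ContDiffOn ℝ j f (Set.Ioi 0)) :
    ∀ x : ℝ, 0 < x →
      (gammaOp ρ)^[j] f x
        = ∑ i ∈ Finset.Icc 1 j, lam i j * x ^ ((i : ℝ) - (j : ℝ) * ρ) * iteratedDeriv i f x :=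
  gammaOp_iterate_expansion_general ρ j f lam hj hl0 hgt hdiag hrec hf
end

section
/- Semigroup property of generalized fractional integrals (Proposition 2.1, item 1): Let ρ > 0, 0 < a < b, α > 0, β > 0, and let f : ℝ → ℝ be continuous on [a,b]. Then for every x ∈ (a,b]: (I^{α,ρ}_{a+}(I^{β,ρ}_{a+} f))(x) = (I^{α+β,ρ}_{a+} f)(x). -/
/-!
The substitution `s = τ ^ ρ` turns the generalized fractional integral into a Riemann–Liouville
integral: `genIntL ρ γ a h x = ρ ^ (-γ) * I^γ_{a^ρ} (h ∘ (· ^ ρ⁻¹)) (x ^ ρ)`, so the claim is the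
semigroup law `I^α I^β = I^(α+β)` of Riemann–Liouville integrals, for the function
`s ↦ f (s ^ ρ⁻¹)`, continuous on `[a ^ ρ, x ^ ρ]`. That law is Dirichlet's formula: exchanging the
order of integration over the triangle `A ≤ t ≤ s ≤ X` (Fubini applies since `f` is bounded there)
leaves the inner integral `∫ s in t..X, (X - s) ^ (α - 1) * (s - t) ^ (β - 1)`, which the affine
change of variables `s = t + (X - t) u` reduces to `B(α, β) (X - t) ^ (α + β - 1)`, and
`B(α, β) = Γ(α) Γ(β) / Γ(α + β)`.
-/

open MeasureTheory Set Real

/-- The left generalized (Katugampola) fractional integral of order `α > 0` with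
parameter `ρ > 0` and base point `a`. -/
noncomputable def genIntL (ρ α a : ℝ) (f : ℝ → ℝ) : ℝ → ℝ := fun x =>
  ρ ^ (1 - α) / Real.Gamma α *
    ∫ τ in a..x, τ ^ (ρ - 1) * f τ * (x ^ ρ - τ ^ ρ) ^ (α - 1)

lemma intervalIntegrable_sub_rpow {γ : ℝ} (hγ : -1 < γ) (e c d : ℝ) :
    IntervalIntegrable (fun t => (e - t) ^ γ) volume c d := by
  simpa using
    (intervalIntegral.intervalIntegrable_rpow' (a := e - c) (b := e - d) hγ).comp_sub_left e

lemma integral_sub_rpow {γ : ℝ} (hγ : 0 < γ) (A s : ℝ) :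
    ∫ t in A..s, (s - t) ^ (γ - 1) = (s - A) ^ γ / γ := by
  rw [intervalIntegral.integral_comp_sub_left (fun y => y ^ (γ - 1)) s, sub_self,
    integral_rpow (Or.inl (by linarith)), zero_rpow (by linarith), sub_add_cancel, sub_zero]

lemma integral_rpow_mul_one_sub_rpow {p q : ℝ} (hp : 0 < p) (hq : 0 < q) :
    ∫ u in (0 : ℝ)..1, u ^ (p - 1) * (1 - u) ^ (q - 1) = ProbabilityTheory.beta p q := by
  have h : Complex.betaIntegral p q =
      ((∫ u in (0 : ℝ)..1, u ^ (p - 1) * (1 - u) ^ (q - 1) : ℝ) : ℂ) := by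
    rw [Complex.betaIntegral, ← intervalIntegral.integral_ofReal]
    refine intervalIntegral.integral_congr fun u hu => ?_
    rw [uIcc_of_le zero_le_one] at hu
    push_cast
    rw [Complex.ofReal_cpow hu.1, Complex.ofReal_cpow (sub_nonneg.2 hu.2)]
    push_cast
    ring
  rw [ProbabilityTheory.beta_eq_betaIntegralReal p q hp hq, h, Complex.ofReal_re]

lemma integral_sub_rpow_mul_sub_rpow {p q t X : ℝ} (hp : 0 < p) (hq : 0 < q) (htX : t < X) :
    ∫ s in t..X, (X - s) ^ (p - 1) * (s - t) ^ (q - 1) =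
      ProbabilityTheory.beta p q * (X - t) ^ (p + q - 1) := by
  have hc : 0 < X - t := sub_pos.2 htX
  have hsub := intervalIntegral.integral_comp_mul_add (a := 0) (b := 1)
    (fun s => (X - s) ^ (p - 1) * (s - t) ^ (q - 1)) hc.ne' t
  have hscale : ∀ u ∈ uIcc (0 : ℝ) 1,
      (X - ((X - t) * u + t)) ^ (p - 1) * ((X - t) * u + t - t) ^ (q - 1) =
        (X - t) ^ (p + q - 2) * (u ^ (q - 1) * (1 - u) ^ (p - 1)) := by
    intro u hu
    rw [uIcc_of_le zero_le_one] at hu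
    rw [show X - ((X - t) * u + t) = (X - t) * (1 - u) by ring, add_sub_cancel_right,
      mul_rpow hc.le hu.1, mul_rpow hc.le (sub_nonneg.2 hu.2),
      show p + q - 2 = (p - 1) + (q - 1) by ring, rpow_add hc]
    ring
  rw [intervalIntegral.integral_congr hscale, intervalIntegral.integral_const_mul,
    integral_rpow_mul_one_sub_rpow hq hp] at hsub
  simp only [mul_zero, zero_add, mul_one, sub_add_cancel, smul_eq_mul] at hsub
  rw [eq_inv_mul_iff_mul_eq₀ hc.ne'] at hsub
  rw [← hsub, show p + q - 1 = 1 + (p + q - 2) by ring, rpow_add hc, rpow_one,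
    ProbabilityTheory.beta, ProbabilityTheory.beta, add_comm q, mul_comm (Gamma q)]
  ring

section Triangle

variable {A X : ℝ}

lemma ite_le_eq_indicator_Iic (s : ℝ) (g : ℝ → ℝ) :
    (fun t => if t ≤ s then g t else 0) = (Iic s).indicator g := by
  ext t; simp [indicator_apply]

lemma restrict_Ioo_restrict_Iic {s : ℝ} (hsX : s < X) :
    (volume.restrict (Ioo A X)).restrict (Iic s) = volume.restrict (Ioc A s) := by
  rw [Measure.restrict_restrict measurableSet_Iic]
  congr 1
  ext t; simp only [mem_inter_iff, mem_Iic, mem_Ioo, mem_Ioc]; grind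

lemma restrict_Ioo_restrict_Ici {t : ℝ} (hAt : A < t) :
    (volume.restrict (Ioo A X)).restrict (Ici t) = volume.restrict (Ico t X) := by
  rw [Measure.restrict_restrict measurableSet_Ici]
  congr 1
  ext s; simp only [mem_inter_iff, mem_Ici, mem_Ioo, mem_Ico]; grind

lemma setIntegral_Ioo_ite_le_left {s : ℝ} (hs : s ∈ Ioo A X) (g : ℝ → ℝ) :
    ∫ t in Ioo A X, (if t ≤ s then g t else 0) = ∫ t in A..s, g t := by
  rw [ite_le_eq_indicator_Iic, integral_indicator measurableSet_Iic,
    restrict_Ioo_restrict_Iic hs.2, intervalIntegral.integral_of_le hs.1.le]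

lemma setIntegral_Ioo_ite_le_right {t : ℝ} (ht : t ∈ Ioo A X) (g : ℝ → ℝ) :
    ∫ s in Ioo A X, (if t ≤ s then g s else 0) = ∫ s in t..X, g s := by
  have hind : (fun s => if t ≤ s then g s else 0) = (Ici t).indicator g := by
    ext s; simp [indicator_apply]
  rw [hind, integral_indicator measurableSet_Ici, restrict_Ioo_restrict_Ici ht.1,
    intervalIntegral.integral_of_le ht.2.le, integral_Ico_eq_integral_Ioo,
    integral_Ioc_eq_integral_Ioo]

lemma integrable_sub_rpow_mul_sub_rpow {α β : ℝ} (hα : 0 < α) (hβ : 0 < β) :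
    Integrable (Function.uncurry fun s t =>
        if t ≤ s then (X - s) ^ (α - 1) * (s - t) ^ (β - 1) else 0)
      ((volume.restrict (Ioo A X)).prod (volume.restrict (Ioo A X))) := by
  have hmeas : Measurable (Function.uncurry fun s t =>
      if t ≤ s then (X - s) ^ (α - 1) * (s - t) ^ (β - 1) else 0) :=
    Measurable.ite (measurableSet_le measurable_snd measurable_fst) (by fun_prop) measurable_const
  rw [integrable_prod_iff hmeas.aestronglyMeasurable]
  constructor
  · refine (ae_restrict_iff' measurableSet_Ioo).2 (ae_of_all _ fun s hs => ?_)
    simp only [Function.uncurry_apply_pair]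
    rw [ite_le_eq_indicator_Iic, integrable_indicator_iff measurableSet_Iic, IntegrableOn,
      restrict_Ioo_restrict_Iic hs.2]
    exact ((intervalIntegrable_sub_rpow (by linarith) s A s).1.const_mul _)
  · have hnorm : ∀ s ∈ Ioo A X, ∫ t, ‖if t ≤ s then (X - s) ^ (α - 1) * (s - t) ^ (β - 1) else 0‖
        ∂volume.restrict (Ioo A X) = (X - s) ^ (α - 1) * ((s - A) ^ β / β) := by
      intro s hs
      have hpos : ∀ t, ‖(if t ≤ s then (X - s) ^ (α - 1) * (s - t) ^ (β - 1) else 0)‖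
          = if t ≤ s then (X - s) ^ (α - 1) * (s - t) ^ (β - 1) else 0 := by
        intro t
        split_ifs with hts
        · exact norm_of_nonneg (mul_nonneg (rpow_nonneg (by linarith [hs.2]) _)
            (rpow_nonneg (by linarith) _))
        · exact norm_zero
      simp only [hpos]
      rw [setIntegral_Ioo_ite_le_left hs, intervalIntegral.integral_const_mul,
        integral_sub_rpow hβ]
    refine Integrable.congr ?_ ((ae_restrict_iff' measurableSet_Ioo).2
      (ae_of_all _ fun s hs => (hnorm s hs).symm))
    have hcont : Continuous fun s => (s - A) ^ β / β :=
      ((continuous_sub_right A).rpow_const fun _ => Or.inr hβ.le).div_const β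
    exact ((intervalIntegrable_sub_rpow (by linarith) X A X).mul_continuousOn
      hcont.continuousOn).1.mono_set Ioo_subset_Ioc_self

theorem integral_sub_rpow_mul_integral_sub_rpow_mul {α β : ℝ} {G : ℝ → ℝ} (hα : 0 < α)
    (hβ : 0 < β) (hAX : A ≤ X) (hG : ContinuousOn G (Icc A X)) :
    ∫ s in A..X, (X - s) ^ (α - 1) * ∫ t in A..s, (s - t) ^ (β - 1) * G t =
      ProbabilityTheory.beta α β * ∫ t in A..X, (X - t) ^ (α + β - 1) * G t := by
  set μ := volume.restrict (Ioo A X)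
  set K : ℝ → ℝ → ℝ := fun s t =>
    G t * if t ≤ s then (X - s) ^ (α - 1) * (s - t) ^ (β - 1) else 0 with hK
  obtain ⟨C, hC⟩ := isCompact_Icc.exists_bound_of_continuousOn hG
  have hK_int : Integrable (Function.uncurry K) (μ.prod μ) := by
    refine (integrable_sub_rpow_mul_sub_rpow hα hβ).bdd_mul (c := C)
      ((hG.mono Ioo_subset_Icc_self).aestronglyMeasurable measurableSet_Ioo).comp_snd ?_
    exact Measure.quasiMeasurePreserving_snd.ae ((ae_restrict_iff' measurableSet_Ioo).2
      (ae_of_all _ fun t ht => hC t (Ioo_subset_Icc_self ht)))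
  have hK_left : ∀ s ∈ Ioo A X,
      ∫ t, K s t ∂μ = (X - s) ^ (α - 1) * ∫ t in A..s, (s - t) ^ (β - 1) * G t := by
    intro s hs
    simp only [hK, mul_ite, mul_zero]
    rw [setIntegral_Ioo_ite_le_left hs, ← intervalIntegral.integral_const_mul]
    exact intervalIntegral.integral_congr fun t _ => by ring
  have hK_right : ∀ t ∈ Ioo A X,
      ∫ s, K s t ∂μ = ProbabilityTheory.beta α β * ((X - t) ^ (α + β - 1) * G t) := by
    intro t ht
    simp only [hK, mul_ite, mul_zero]
    rw [setIntegral_Ioo_ite_le_right ht, intervalIntegral.integral_const_mul,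
      integral_sub_rpow_mul_sub_rpow hα hβ ht.2]
    ring
  calc ∫ s in A..X, (X - s) ^ (α - 1) * ∫ t in A..s, (s - t) ^ (β - 1) * G t
      = ∫ s, ∫ t, K s t ∂μ ∂μ := by
        rw [intervalIntegral.integral_of_le hAX, integral_Ioc_eq_integral_Ioo]
        exact setIntegral_congr_fun measurableSet_Ioo fun s hs => (hK_left s hs).symm
    _ = ∫ t, ∫ s, K s t ∂μ ∂μ := integral_integral_swap hK_int
    _ = ∫ t in Ioo A X, ProbabilityTheory.beta α β * ((X - t) ^ (α + β - 1) * G t) :=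
        setIntegral_congr_fun measurableSet_Ioo hK_right
    _ = ProbabilityTheory.beta α β * ∫ t in A..X, (X - t) ^ (α + β - 1) * G t := by
        rw [integral_const_mul, intervalIntegral.integral_of_le hAX,
          integral_Ioc_eq_integral_Ioo]

end Triangle

noncomputable def riemannLiouville (γ A : ℝ) (G : ℝ → ℝ) (X : ℝ) : ℝ :=
  (Gamma γ)⁻¹ * ∫ t in A..X, (X - t) ^ (γ - 1) * G t

lemma riemannLiouville_congr {γ A X : ℝ} {G H : ℝ → ℝ} (h : EqOn G H (uIcc A X)) :
    riemannLiouville γ A G X = riemannLiouville γ A H X := by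
  rw [riemannLiouville, riemannLiouville,
    intervalIntegral.integral_congr fun t ht => by rw [h ht]]

lemma riemannLiouville_const_mul (γ A c : ℝ) (G : ℝ → ℝ) (X : ℝ) :
    riemannLiouville γ A (fun s => c * G s) X = c * riemannLiouville γ A G X := by
  rw [riemannLiouville, riemannLiouville, ← intervalIntegral.integral_const_mul,
    ← intervalIntegral.integral_const_mul, ← intervalIntegral.integral_const_mul]
  exact intervalIntegral.integral_congr fun t _ => by ring

theorem riemannLiouville_riemannLiouville {α β A X : ℝ} {G : ℝ → ℝ} (hα : 0 < α) (hβ : 0 < β)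
    (hAX : A ≤ X) (hG : ContinuousOn G (Icc A X)) :
    riemannLiouville α A (riemannLiouville β A G) X = riemannLiouville (α + β) A G X := by
  have hinner : ∫ s in A..X, (X - s) ^ (α - 1) * riemannLiouville β A G s =
      (Gamma β)⁻¹ * ∫ s in A..X, (X - s) ^ (α - 1) * ∫ t in A..s, (s - t) ^ (β - 1) * G t := by
    rw [← intervalIntegral.integral_const_mul]
    exact intervalIntegral.integral_congr fun s _ => by rw [riemannLiouville]; ring
  rw [riemannLiouville, hinner, integral_sub_rpow_mul_integral_sub_rpow_mul hα hβ hAX hG,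
    riemannLiouville, ProbabilityTheory.beta]
  have := (Gamma_pos_of_pos hα).ne'
  have := (Gamma_pos_of_pos hβ).ne'
  have := (Gamma_pos_of_pos (add_pos hα hβ)).ne'
  field_simp

lemma mapsTo_rpow_inv_Icc {ρ a x : ℝ} (hρ : 0 < ρ) (ha : 0 ≤ a) (hax : a ≤ x) :
    MapsTo (fun s => s ^ ρ⁻¹) (Icc (a ^ ρ) (x ^ ρ)) (Icc a x) := by
  intro s ⟨has, hsx⟩
  have hs : 0 ≤ s := (rpow_nonneg ha ρ).trans has
  exact ⟨(le_rpow_inv_iff_of_pos ha hs hρ).2 has,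
    (rpow_inv_le_iff_of_pos hs (ha.trans hax) hρ).2 hsx⟩

lemma integral_rpow_sub_one_mul_comp_rpow {ρ a x : ℝ} (hρ : 0 < ρ) (ha : 0 ≤ a) (hax : a ≤ x)
    (g : ℝ → ℝ) :
    ∫ τ in a..x, τ ^ (ρ - 1) * g (τ ^ ρ) = ρ⁻¹ * ∫ s in a ^ ρ..x ^ ρ, g s := by
  have := intervalIntegral.integral_comp_mul_deriv_of_deriv_nonneg (g := g)
    (f := fun τ => τ ^ ρ) (f' := fun τ => ρ * τ ^ (ρ - 1)) (a := a) (b := x) ?_ ?_ ?_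
  · rw [← this, ← intervalIntegral.integral_const_mul]
    refine intervalIntegral.integral_congr fun τ _ => ?_
    simp only [Function.comp_apply]
    field_simp
  · exact continuousOn_id.rpow_const fun τ _ => Or.inr hρ.le
  · intro τ hτ
    rw [min_eq_left hax] at hτ
    exact hasDerivAt_rpow_const (Or.inl (ha.trans_lt hτ.1).ne')
  · intro τ hτ
    rw [min_eq_left hax] at hτ
    exact mul_nonneg hρ.le (rpow_nonneg (ha.trans hτ.1.le) _)

lemma genIntL_eq_riemannLiouville {ρ a x : ℝ} (hρ : 0 < ρ) (ha : 0 ≤ a) (hax : a ≤ x)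
    (γ : ℝ) (h : ℝ → ℝ) :
    genIntL ρ γ a h x =
      ρ ^ (-γ) * riemannLiouville γ (a ^ ρ) (fun s => h (s ^ ρ⁻¹)) (x ^ ρ) := by
  have hsubst : ∫ τ in a..x, τ ^ (ρ - 1) * h τ * (x ^ ρ - τ ^ ρ) ^ (γ - 1) =
      ρ⁻¹ * ∫ s in a ^ ρ..x ^ ρ, (x ^ ρ - s) ^ (γ - 1) * h (s ^ ρ⁻¹) := by
    rw [← integral_rpow_sub_one_mul_comp_rpow hρ ha hax]
    refine intervalIntegral.integral_congr fun τ hτ => ?_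
    rw [uIcc_of_le hax] at hτ
    rw [rpow_rpow_inv (ha.trans hτ.1) hρ.ne']
    ring
  rw [genIntL, hsubst, riemannLiouville, sub_eq_add_neg, rpow_add hρ, rpow_one]
  field_simp

theorem genInt_semigroup_general (ρ a b α β : ℝ) (f : ℝ → ℝ)
    (hρ : 0 < ρ) (ha : 0 < a) (hα : 0 < α) (hβ : 0 < β)
    (hf : ContinuousOn f (Set.Icc a b)) :
    ∀ x ∈ Set.Ioc a b,
      genIntL ρ α a (genIntL ρ β a f) x = genIntL ρ (α + β) a f x := by
  rintro x ⟨hax, hxb⟩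
  have haρ : a ^ ρ ≤ x ^ ρ := rpow_le_rpow ha.le hax.le hρ.le
  have hmaps := mapsTo_rpow_inv_Icc hρ ha.le hax.le
  have hF : ContinuousOn (fun s => f (s ^ ρ⁻¹)) (Icc (a ^ ρ) (x ^ ρ)) :=
    (hf.mono (Icc_subset_Icc_right hxb)).comp
      (continuousOn_id.rpow_const fun _ _ => Or.inr (inv_pos.2 hρ).le) hmaps
  have hinner : EqOn (fun s => genIntL ρ β a f (s ^ ρ⁻¹))
      (fun s => ρ ^ (-β) * riemannLiouville β (a ^ ρ) (fun s => f (s ^ ρ⁻¹)) s)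
      (uIcc (a ^ ρ) (x ^ ρ)) := by
    intro s hs
    rw [uIcc_of_le haρ] at hs
    dsimp only
    rw [genIntL_eq_riemannLiouville hρ ha.le (hmaps hs).1,
      rpow_inv_rpow ((rpow_nonneg ha.le ρ).trans hs.1) hρ.ne']
  rw [genIntL_eq_riemannLiouville hρ ha.le hax.le, genIntL_eq_riemannLiouville hρ ha.le hax.le,
    riemannLiouville_congr hinner, riemannLiouville_const_mul,
    riemannLiouville_riemannLiouville hα hβ haρ hF, ← mul_assoc, ← rpow_add hρ, neg_add]

/-- Semigroup property of generalized fractional integrals (Proposition 2.1, item 1). -/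
theorem genInt_semigroup (ρ a b α β : ℝ) (f : ℝ → ℝ)
    (hρ : 0 < ρ) (ha : 0 < a) (hab : a < b) (hα : 0 < α) (hβ : 0 < β)
    (hf : ContinuousOn f (Set.Icc a b)) :
    ∀ x ∈ Set.Ioc a b,
      genIntL ρ α a (genIntL ρ β a f) x = genIntL ρ (α + β) a f x :=
  genInt_semigroup_general ρ a b α β f hρ ha hα hβ hf
end

section
/- Hadamard limit of the generalized fractional integral (Theorem 2.2, item 2): Let α > 0, 0 < a < x, and let f : ℝ → ℝ be continuous on [a,x]. Then the limit as ρ → 0⁺ of (ρ^{1−α}/Γ(α)) · ∫_a^x τ^{ρ−1} f(τ) (x^ρ − τ^ρ)^{α−1} dτ equals (1/Γ(α)) · ∫_a^x (log(x/τ))^{α−1} f(τ) dτ/τ, i.e. the generalized (Katugampola) fractional integral converges pointwise to the Hadamard fractional integral as ρ → 0⁺. -/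
/-!
For `ρ > 0` we have `ρ ^ (1 - α) * (x ^ ρ - τ ^ ρ) ^ (α - 1) = ((x ^ ρ - τ ^ ρ) / ρ) ^ (α - 1)`,
and `(x ^ ρ - τ ^ ρ) / ρ → log (x / τ)` as `ρ → 0⁺`, so the integrands converge pointwise to the
Hadamard integrand. By the mean value theorem `(x ^ ρ - τ ^ ρ) / ρ = ξ ^ (ρ - 1) * (x - τ)` for
some `ξ ∈ (τ, x)`, which for `ρ ∈ (0, 1)` is comparable to `x - τ` uniformly in `ρ` and `τ`.
Hence the integrands are dominated by a multiple of the integrable `(x - τ) ^ (α - 1)`, and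
dominated convergence applies.
-/

open Real Set Filter MeasureTheory intervalIntegral
open scoped Topology Interval

lemma rpow_le_max_of_mem_Icc {y p q e : ℝ} (hy : 0 < y) (he : e ∈ Icc p q) :
    y ^ e ≤ max (y ^ p) (y ^ q) := by
  rcases le_total 1 y with h1 | h1
  · exact (rpow_le_rpow_of_exponent_le h1 he.2).trans (le_max_right _ _)
  · exact (rpow_le_rpow_of_exponent_ge hy h1 he.1).trans (le_max_left _ _)

lemma min_le_rpow_of_mem_Icc {y p q e : ℝ} (hy : 0 < y) (he : e ∈ Icc p q) :
    min (y ^ p) (y ^ q) ≤ y ^ e := by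
  rcases le_total 1 y with h1 | h1
  · exact (min_le_left _ _).trans (rpow_le_rpow_of_exponent_le h1 he.1)
  · exact (min_le_right _ _).trans (rpow_le_rpow_of_exponent_ge hy h1 he.2)

lemma exists_rpow_sub_rpow_div_eq {s t ρ : ℝ} (hs : 0 < s) (hst : s < t) (hρ : ρ ≠ 0) :
    ∃ ξ ∈ Ioo s t, (t ^ ρ - s ^ ρ) / ρ = ξ ^ (ρ - 1) * (t - s) := by
  obtain ⟨ξ, hξ, hslope⟩ := exists_hasDerivAt_eq_slope (fun y => y ^ ρ)
    (fun y => ρ * y ^ (ρ - 1)) hst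
    (fun y hy => (continuousAt_rpow_const y ρ (.inl (hs.trans_le hy.1).ne')).continuousWithinAt)
    (fun y hy => hasDerivAt_rpow_const (.inl (hs.trans hy.1).ne'))
  refine ⟨ξ, hξ, ?_⟩
  rw [div_eq_iff hρ, (div_eq_iff (sub_ne_zero.2 hst.ne')).1 hslope.symm]
  ring

lemma rpow_sub_rpow_div_mem_Icc {s t ρ : ℝ} (hs : 0 < s) (hst : s ≤ t) (hρ : ρ ≠ 0)
    (hρ1 : ρ ≤ 1) :
    (t ^ ρ - s ^ ρ) / ρ ∈ Icc (t ^ (ρ - 1) * (t - s)) (s ^ (ρ - 1) * (t - s)) := by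
  rcases hst.eq_or_lt with rfl | hst
  · simp
  obtain ⟨ξ, hξ, heq⟩ := exists_rpow_sub_rpow_div_eq hs hst hρ
  have hexp : ρ - 1 ≤ 0 := by linarith
  have hts : 0 ≤ t - s := by linarith
  rw [heq]
  exact ⟨mul_le_mul_of_nonneg_right (rpow_le_rpow_of_nonpos (hs.trans hξ.1) hξ.2.le hexp) hts,
    mul_le_mul_of_nonneg_right (rpow_le_rpow_of_nonpos hs hξ.1.le hexp) hts⟩

lemma tendsto_rpow_sub_rpow_div {x τ : ℝ} (hx : 0 < x) (hτ : 0 < τ) :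
    Tendsto (fun ρ => (x ^ ρ - τ ^ ρ) / ρ) (𝓝[>] 0) (𝓝 (log (x / τ))) := by
  rw [log_div hx.ne' hτ.ne']
  refine ((tendsto_rpow_sub_one_log hx).sub (tendsto_rpow_sub_one_log hτ)).congr fun ρ => ?_
  ring

lemma rpow_le_max_mul_rpow {c C y h : ℝ} (p : ℝ) (hc : 0 < c) (hy : 0 < y)
    (hlo : c * y ≤ h) (hhi : h ≤ C * y) : h ^ p ≤ max (C ^ p) (c ^ p) * y ^ p := by
  have hh : 0 < h := (mul_pos hc hy).trans_le hlo
  rcases le_total 0 p with hp | hp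
  · have hC : 0 ≤ C := by nlinarith
    calc h ^ p ≤ (C * y) ^ p := rpow_le_rpow hh.le hhi hp
      _ = C ^ p * y ^ p := mul_rpow hC hy.le
      _ ≤ _ := by gcongr; exact le_max_left _ _
  · calc h ^ p ≤ (c * y) ^ p := rpow_le_rpow_of_nonpos (by positivity) hlo hp
      _ = c ^ p * y ^ p := mul_rpow hc.le hy.le
      _ ≤ _ := by gcongr; exact le_max_right _ _


lemma exists_norm_katugampola_integrand_le {α a x : ℝ} {f : ℝ → ℝ} (ha : 0 < a) (hax : a ≤ x)
    (hf : ContinuousOn f (Icc a x)) :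
    ∃ K, ∀ ρ ∈ Ioo (0 : ℝ) 1, ∀ τ ∈ Ioo a x,
      ‖τ ^ (ρ - 1) * f τ * ((x ^ ρ - τ ^ ρ) / ρ) ^ (α - 1)‖ ≤ K * (x - τ) ^ (α - 1) := by
  obtain ⟨M, hM⟩ := isCompact_Icc.exists_bound_of_continuousOn hf
  have hx : 0 < x := ha.trans_le hax
  set A := max (a ^ (-1 : ℝ)) (a ^ (0 : ℝ))
  set c := min (x ^ (-1 : ℝ)) (x ^ (0 : ℝ))
  have hA : 0 ≤ A := le_max_of_le_right (by positivity)
  have hc : 0 < c := lt_min (by positivity) (by positivity)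
  refine ⟨A * M * max (A ^ (α - 1)) (c ^ (α - 1)), fun ρ hρ τ hτ => ?_⟩
  have hexp : ρ - 1 ∈ Icc (-1 : ℝ) 0 := ⟨by linarith [hρ.1], by linarith [hρ.2]⟩
  have hτ0 : 0 < τ := ha.trans hτ.1
  have hxτ : 0 ≤ x - τ := sub_nonneg.2 hτ.2.le
  have hτI : τ ∈ Icc a x := Ioo_subset_Icc_self hτ
  have hpow_le : τ ^ (ρ - 1) ≤ A :=
    (rpow_le_rpow_of_nonpos ha hτ.1.le hexp.2).trans (rpow_le_max_of_mem_Icc ha hexp)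
  obtain ⟨hlo, hhi⟩ := rpow_sub_rpow_div_mem_Icc hτ0 hτ.2.le hρ.1.ne' hρ.2.le
  have hquot_lo : c * (x - τ) ≤ (x ^ ρ - τ ^ ρ) / ρ :=
    (mul_le_mul_of_nonneg_right (min_le_rpow_of_mem_Icc hx hexp) hxτ).trans hlo
  have hquot_hi : (x ^ ρ - τ ^ ρ) / ρ ≤ A * (x - τ) :=
    hhi.trans (mul_le_mul_of_nonneg_right hpow_le hxτ)
  have hquot0 : 0 ≤ (x ^ ρ - τ ^ ρ) / ρ := (mul_nonneg hc.le hxτ).trans hquot_lo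
  rw [norm_mul, norm_mul, norm_of_nonneg (rpow_nonneg hτ0.le _),
    norm_of_nonneg (rpow_nonneg hquot0 _), mul_assoc _ _ ((x - τ) ^ (α - 1))]
  exact mul_le_mul (mul_le_mul hpow_le (hM τ hτI) (norm_nonneg _) hA)
    (rpow_le_max_mul_rpow (α - 1) hc (sub_pos.2 hτ.2) hquot_lo hquot_hi)
    (rpow_nonneg hquot0 _) (mul_nonneg hA ((norm_nonneg _).trans (hM τ hτI)))

lemma tendsto_katugampola_integrand {x τ : ℝ} (α y : ℝ) (hx : 0 < x) (hτ : 0 < τ)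
    (hτx : τ ≠ x) :
    Tendsto (fun ρ => τ ^ (ρ - 1) * y * ((x ^ ρ - τ ^ ρ) / ρ) ^ (α - 1)) (𝓝[>] 0)
      (𝓝 (log (x / τ) ^ (α - 1) * y / τ)) := by
  have hpow : Tendsto (fun ρ : ℝ => τ ^ (ρ - 1)) (𝓝[>] 0) (𝓝 τ⁻¹) := by
    have := ((continuousAt_const_rpow hτ.ne').comp
      ((continuous_sub_right 1).continuousAt (x := 0))).tendsto
    simpa [Function.comp_def, rpow_neg_one] using this.mono_left nhdsWithin_le_nhds
  have hlog : log (x / τ) ≠ 0 :=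
    log_ne_zero_of_pos_of_ne_one (div_pos hx hτ)
      (by rwa [ne_eq, div_eq_one_iff_eq hτ.ne', eq_comm])
  have hquot : Tendsto (fun ρ : ℝ => ((x ^ ρ - τ ^ ρ) / ρ) ^ (α - 1)) (𝓝[>] 0)
      (𝓝 (log (x / τ) ^ (α - 1))) :=
    (continuousAt_rpow_const _ (α - 1) (.inl hlog)).tendsto.comp (tendsto_rpow_sub_rpow_div hx hτ)
  convert (hpow.mul_const y).mul hquot using 2
  ring

theorem tendsto_integral_katugampola_integrand {α a x : ℝ} {f : ℝ → ℝ} (hα : 0 < α)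
    (ha : 0 < a) (hax : a ≤ x) (hf : ContinuousOn f (Icc a x)) :
    Tendsto (fun ρ => ∫ τ in a..x, τ ^ (ρ - 1) * f τ * ((x ^ ρ - τ ^ ρ) / ρ) ^ (α - 1))
      (𝓝[>] 0) (𝓝 (∫ τ in a..x, log (x / τ) ^ (α - 1) * f τ / τ)) := by
  obtain ⟨K, hK⟩ := exists_norm_katugampola_integrand_le (α := α) ha hax hf
  have hIoo : ∀ᵐ τ, τ ∈ Ι a x → τ ∈ Ioo a x := by
    rw [uIoc_of_le hax]
    filter_upwards [(Ioo_ae_eq_Ioc (μ := volume) (a := a) (b := x)).mem_iff] with τ hτ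
    exact hτ.2
  refine tendsto_integral_filter_of_dominated_convergence (fun τ => K * (x - τ) ^ (α - 1))
    (Eventually.of_forall fun ρ => ?_) ?_ ?_ ?_
  · have hfm : AEStronglyMeasurable f (volume.restrict (Ι a x)) := by
      rw [uIoc_of_le hax]
      exact (hf.mono Ioc_subset_Icc_self).aestronglyMeasurable measurableSet_Ioc
    exact ((by fun_prop : Measurable fun τ : ℝ => τ ^ (ρ - 1)).aestronglyMeasurable.mul hfm).mul
      (by fun_prop : Measurable fun τ : ℝ => ((x ^ ρ - τ ^ ρ) / ρ) ^ (α - 1)).aestronglyMeasurable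
  · filter_upwards [Ioo_mem_nhdsGT (zero_lt_one' ℝ)] with ρ hρ
    filter_upwards [hIoo] with τ hτ hτI
    exact hK ρ hρ τ (hτ hτI)
  · have hrpow := intervalIntegrable_rpow' (a := 0) (b := x - a) (r := α - 1) (by linarith)
    simpa only [sub_zero, sub_sub_cancel] using ((hrpow.comp_sub_left x).const_mul K).symm
  · filter_upwards [hIoo] with τ hτ hτI
    exact tendsto_katugampola_integrand α (f τ) (ha.trans_le hax) (ha.trans (hτ hτI).1)
      (hτ hτI).2.ne

lemma rpow_one_sub_mul_integral_katugampola {α a x ρ : ℝ} (f : ℝ → ℝ) (ha : 0 ≤ a)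
    (hax : a ≤ x) (hρ : 0 < ρ) :
    ρ ^ (1 - α) * ∫ τ in a..x, τ ^ (ρ - 1) * f τ * (x ^ ρ - τ ^ ρ) ^ (α - 1) =
      ∫ τ in a..x, τ ^ (ρ - 1) * f τ * ((x ^ ρ - τ ^ ρ) / ρ) ^ (α - 1) := by
  rw [← intervalIntegral.integral_const_mul]
  refine integral_congr fun τ hτ => ?_
  rw [uIcc_of_le hax] at hτ
  have hdiff : 0 ≤ x ^ ρ - τ ^ ρ := sub_nonneg.2 (rpow_le_rpow (ha.trans hτ.1) hτ.2 hρ.le)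
  rw [div_rpow hdiff hρ.le, ← neg_sub α 1, rpow_neg hρ.le]
  ring

/-- Hadamard limit of the generalized (Katugampola) fractional integral
(Theorem 2.2, item 2): as `ρ → 0⁺` the Katugampola fractional integral of order `α`
of `f` converges pointwise to the Hadamard fractional integral of order `α` of `f`. -/
theorem katugampola_tendsto_hadamard (α a x : ℝ) (f : ℝ → ℝ)
    (hα : 0 < α) (ha : 0 < a) (hax : a < x)
    (hf : ContinuousOn f (Set.Icc a x)) :
    Filter.Tendsto
      (fun ρ : ℝ => ρ ^ (1 - α) / Real.Gamma α *
        ∫ τ in a..x, τ ^ (ρ - 1) * f τ * (x ^ ρ - τ ^ ρ) ^ (α - 1))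
      (nhdsWithin 0 (Set.Ioi 0))
      (nhds (1 / Real.Gamma α * ∫ τ in a..x, Real.log (x / τ) ^ (α - 1) * f τ / τ)) := by
  refine ((tendsto_integral_katugampola_integrand hα ha hax.le hf).const_mul _).congr' ?_
  filter_upwards [self_mem_nhdsWithin] with ρ (hρ : 0 < ρ)
  rw [← rpow_one_sub_mul_integral_katugampola f ha.le hax.le hρ]
  ring
end
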